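/- arXiv:2510.04371 — 6 statements merged into one kernel-verified Lean document; each statement's English description precedes it below -/
import Mathlib

section
/- Let p ∈ [0,1] and define the sequence S_n by S_0 = 0, S_1 = p, and S_n = p(1 + S_{n-2}) + (1-p) S_{n-1} for n ≥ 2. Then for all n ≥ 0, S_n = (p/(1+p)) n + (p²/(1+p)²)(1 - (-p)^n). -/
/-- Closed form for the expected-hits recurrence:
`S 0 = 0`, `S 1 = p`, `S (n+2) = p (1 + S n) + (1-p) S (n+1)` implies
`S n = (p/(1+p)) n + (p²/(1+p)²)(1 - (-p)^n)`. -/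
theorem stmt_2 (p : ℝ) (hp0 : 0 ≤ p) (hp1 : p ≤ 1) (S : ℕ → ℝ)
    (h0 : S 0 = 0) (h1 : S 1 = p)
    (hrec : ∀ n : ℕ, S (n + 2) = p * (1 + S n) + (1 - p) * S (n + 1)) :
    ∀ n : ℕ, S n = (p / (1 + p)) * n + (p ^ 2 / (1 + p) ^ 2) * (1 - (-p) ^ n) := by
  have hne : (1 : ℝ) + p ≠ 0 := by positivity
  intro n
  induction n using Nat.twoStepInduction with
  | zero => simp [h0]
  | one =>
    rw [h1]
    field_simp
    ring
  | more n ih2 ih1 =>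
    rw [hrec n, ih1, ih2]
    push_cast
    field_simp
    ring
end

section
/- For the sequence defined by S_0 = 0, S_1 = p, S_n = p(1 + S_{n-2}) + (1-p)S_{n-1} (with 0 < p ≤ 1), the limit of S_n / n as n → ∞ equals p/(1+p). -/
open Filter

/-- For the expected-hits recurrence with `0 < p ≤ 1`, `S n / n → p/(1+p)`. -/
theorem stmt_4 (p : ℝ) (hp0 : 0 < p) (hp1 : p ≤ 1) (S : ℕ → ℝ)
    (h0 : S 0 = 0) (h1 : S 1 = p)
    (hrec : ∀ n : ℕ, S (n + 2) = p * (1 + S n) + (1 - p) * S (n + 1)) :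
    Filter.Tendsto (fun n : ℕ => S n / n) Filter.atTop (nhds (p / (1 + p))) := by
  have hq : (0:ℝ) < 1 + p := by linarith
  have hq' : (1:ℝ) + p ≠ 0 := ne_of_gt hq
  have key : ∀ n : ℕ, S n = p/(1+p) * n + p^2/(1+p)^2 * (1 - (-p)^n) := by
    intro n
    induction n using Nat.twoStepInduction with
    | zero => simp [h0]
    | one => rw [h1]; field_simp; ring
    | more n ih1 ih2 =>
      rw [hrec n, ih1, ih2]
      push_cast
      field_simp
      ring
  have hT : Tendsto (fun n : ℕ => (p^2/(1+p)^2 * (1 - (-p)^n))/n) atTop (nhds 0) := by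
    refine squeeze_zero_norm ?_ (tendsto_const_div_atTop_nhds_zero_nat (2*(p^2/(1+p)^2)))
    intro n
    rw [norm_div, Real.norm_natCast]
    rcases Nat.eq_zero_or_pos n with h | h
    · simp [h]
    · gcongr
      rw [norm_mul]
      have h1' : ‖p^2/(1+p)^2‖ = p^2/(1+p)^2 := by
        rw [Real.norm_eq_abs, abs_of_nonneg (by positivity)]
      rw [h1']
      have h2' : ‖1 - (-p)^n‖ ≤ 2 := by
        calc ‖1 - (-p)^n‖ ≤ ‖(1:ℝ)‖ + ‖(-p)^n‖ := norm_sub_le _ _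
          _ ≤ 1 + 1 := by
            rw [norm_one, norm_pow, Real.norm_eq_abs, abs_neg, abs_of_pos hp0]
            have := pow_le_one₀ hp0.le hp1 (n := n)
            linarith
          _ = 2 := by norm_num
      nlinarith [h2', sq_nonneg p, div_nonneg (sq_nonneg p) (sq_nonneg (1+p)), mul_le_mul_of_nonneg_left h2' (show (0:ℝ) ≤ p^2/(1+p)^2 by positivity)]
  have hmain : Tendsto (fun n : ℕ => p/(1+p) + (p^2/(1+p)^2 * (1 - (-p)^n))/n)
      atTop (nhds (p/(1+p))) := by
    simpa using tendsto_const_nhds.add hT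
  apply hmain.congr'
  filter_upwards [eventually_ge_atTop 1] with n hn
  have hn0 : (n:ℝ) ≠ 0 := Nat.cast_ne_zero.mpr (by omega)
  rw [key n]
  field_simp
end

section
/- Let S_n satisfy S_0=0, S_1=p, S_n = p(1+S_{n-2}) + (1-p)S_{n-1} for 0 ≤ p ≤ 1. Then for all n ≥ 1, S_n ≤ n·p/(1+p) + p²/(1+p)² · 2, and in particular S_n ≤ n for all n. -/
/-- Upper bounds for the expected-hits recurrence: for `n ≥ 1`,
`S n ≤ n·p/(1+p) + 2·p²/(1+p)²`, and in particular `S n ≤ n` for all `n`. -/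
theorem stmt_9 (p : ℝ) (hp0 : 0 ≤ p) (hp1 : p ≤ 1) (S : ℕ → ℝ)
    (h0 : S 0 = 0) (h1 : S 1 = p)
    (hrec : ∀ n : ℕ, S (n + 2) = p * (1 + S n) + (1 - p) * S (n + 1)) :
    (∀ n : ℕ, 1 ≤ n → S n ≤ (n : ℝ) * p / (1 + p) + p ^ 2 / (1 + p) ^ 2 * 2) ∧
      (∀ n : ℕ, S n ≤ (n : ℝ)) := by
  have hp : (0:ℝ) < 1 + p := by linarith
  have hp' : (1 + p) ≠ 0 := ne_of_gt hp
  -- closed form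
  have closed : ∀ n : ℕ,
      S n = (n : ℝ) * p / (1 + p) + p ^ 2 / (1 + p) ^ 2 * (1 - (-p) ^ n) ∧
      S (n + 1) = ((n : ℝ) + 1) * p / (1 + p) + p ^ 2 / (1 + p) ^ 2 * (1 - (-p) ^ (n + 1)) := by
    intro n
    induction n with
    | zero =>
      constructor
      · simp [h0]
      · rw [h1]; field_simp; ring
    | succ k ih =>
      obtain ⟨ihk, ihk1⟩ := ih
      refine ⟨by push_cast; exact ihk1, ?_⟩
      rw [hrec k, ihk, ihk1]
      push_cast
      field_simp
      ring
  constructor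
  · intro n _
    have hc := (closed n).1
    have hpow : -(1:ℝ) ≤ (-p) ^ n := by
      have := abs_pow (-p) n ▸ (pow_le_one₀ (abs_nonneg (-p)) (by rw [abs_neg, abs_of_nonneg hp0]; exact hp1) : |(-p)| ^ n ≤ 1)
      have h2 : |(-p) ^ n| ≤ 1 := by rw [abs_pow, abs_neg, abs_of_nonneg hp0]; exact pow_le_one₀ hp0 hp1
      linarith [neg_abs_le ((-p) ^ n)]
    have hb : 0 ≤ p ^ 2 / (1 + p) ^ 2 := div_nonneg (sq_nonneg p) (sq_nonneg _)
    rw [hc]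
    have : (1 : ℝ) - (-p) ^ n ≤ 2 := by linarith
    nlinarith [mul_le_mul_of_nonneg_left this hb]
  · intro n
    have key : ∀ m : ℕ, S m ≤ (m : ℝ) ∧ S (m + 1) ≤ (m : ℝ) + 1 := by
      intro m
      induction m with
      | zero => simp [h0, h1]; linarith
      | succ k ih =>
        obtain ⟨ihk, ihk1⟩ := ih
        refine ⟨by push_cast; linarith, ?_⟩
        rw [hrec k]
        push_cast
        nlinarith
    simpa using (key n).1
end

section
/- Let p ∈ (0,1), α, β > 0, T ≥ 2, and R(T) = 1 - (1/T)(α/(α+β))[(T-1)p/(1+p) + p²/(1+p)² - (p²/(1+p)²)(-p)^{T-1}]. Then R(T) ∈ (1/2, 1) for all T ≥ 2. -/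
/-- For `p ∈ (0,1)`, `α, β > 0` and every `T ≥ 2`, the runtime ratio
`R(T)` lies strictly between `1/2` and `1`. -/
theorem stmt_15 (p α β : ℝ) (hp0 : 0 < p) (hp1 : p < 1) (hα : 0 < α) (hβ : 0 < β)
    (R : ℕ → ℝ)
    (hR : ∀ T : ℕ, 2 ≤ T →
      R T = 1 - (1 / (T : ℝ)) * (α / (α + β)) *
        (((T : ℝ) - 1) * p / (1 + p) + p ^ 2 / (1 + p) ^ 2
          - (p ^ 2 / (1 + p) ^ 2) * (-p) ^ (T - 1))) :
    ∀ T : ℕ, 2 ≤ T → (1 / 2 : ℝ) < R T ∧ R T < 1 := by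
  intro T hT
  rw [hR T hT]
  have ht : (2:ℝ) ≤ (T:ℝ) := by exact_mod_cast hT
  have ht0 : (0:ℝ) < (T:ℝ) := by linarith
  have hab : 0 < α + β := by linarith
  have ha0 : 0 < α / (α + β) := div_pos hα hab
  have ha1 : α / (α + β) < 1 := (div_lt_one hab).mpr (by linarith)
  have hp1' : (0:ℝ) < 1 + p := by linarith
  set x : ℝ := (-p) ^ (T - 1) with hxdef
  have hxabs : |x| < 1 := by
    rw [hxdef, abs_pow, abs_neg, abs_of_pos hp0]
    exact pow_lt_one₀ hp0.le hp1 (by omega)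
  have hx1 : x < 1 := lt_of_le_of_lt (le_abs_self x) hxabs
  have hx2 : -1 < x := neg_lt_of_abs_lt hxabs
  have hq0 : 0 < p / (1 + p) := div_pos hp0 hp1'
  have hq1 : p / (1 + p) < 1/2 := by rw [div_lt_iff₀ hp1']; linarith
  set q := p / (1 + p) with hqdef
  have hS : ((T:ℝ) - 1) * p / (1 + p) + p ^ 2 / (1 + p) ^ 2 - (p ^ 2 / (1 + p) ^ 2) * x
      = ((T:ℝ) - 1) * q + q ^ 2 * (1 - x) := by
    rw [hqdef]; field_simp; ring
  rw [hS]
  set s := ((T:ℝ) - 1) * q + q ^ 2 * (1 - x) with hsdef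
  have hS0 : 0 < s := by nlinarith
  have hS2 : s < (T:ℝ) / 2 := by nlinarith
  have hinv : 0 < 1 / (T:ℝ) := by positivity
  constructor
  · have h1 : (α / (α + β)) * s < s := by nlinarith
    have h2 : 1 / (T:ℝ) * ((α / (α + β)) * s) < 1 / (T:ℝ) * ((T:ℝ)/2) := by
      apply mul_lt_mul_of_pos_left _ hinv
      linarith
    have h3 : 1 / (T:ℝ) * ((T:ℝ)/2) = 1/2 := by field_simp
    nlinarith [h2]
  · have : 0 < 1 / (T:ℝ) * (α / (α + β)) * s := by positivity
    linarith
end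

section
/- For p ∈ [0,1] the sequence S_n defined by S_0 = 0, S_1 = p, S_n = p(1+S_{n-2}) + (1-p)S_{n-1} satisfies S_n ≥ (p/(1+p))·n for even n and S_n ≥ (p/(1+p))·n - p²/(1+p)²·(1+p^n) generally; moreover |S_n - (p/(1+p))n - p²/(1+p)²| ≤ (p²/(1+p)²)·p^n. -/
/-- Bounds for the expected-hits recurrence: `S n ≥ (p/(1+p))n` for even `n`,
`S n ≥ (p/(1+p))n - (p²/(1+p)²)(1 + pⁿ)` in general, and
`|S n - (p/(1+p))n - p²/(1+p)²| ≤ (p²/(1+p)²)·pⁿ`. -/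
theorem stmt_17 (p : ℝ) (hp0 : 0 ≤ p) (hp1 : p ≤ 1) (S : ℕ → ℝ)
    (h0 : S 0 = 0) (h1 : S 1 = p)
    (hrec : ∀ n : ℕ, S (n + 2) = p * (1 + S n) + (1 - p) * S (n + 1)) :
    (∀ n : ℕ, Even n → (p / (1 + p)) * n ≤ S n) ∧
      (∀ n : ℕ, (p / (1 + p)) * n - (p ^ 2 / (1 + p) ^ 2) * (1 + p ^ n) ≤ S n) ∧
      (∀ n : ℕ, |S n - (p / (1 + p)) * n - p ^ 2 / (1 + p) ^ 2|
        ≤ (p ^ 2 / (1 + p) ^ 2) * p ^ n) := by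
  have hp : (0:ℝ) < 1 + p := by linarith
  have hp' : (1 + p) ≠ 0 := ne_of_gt hp
  set c := p / (1 + p) with hc
  set d := p ^ 2 / (1 + p) ^ 2 with hd
  have hd0 : 0 ≤ d := by positivity
  -- closed form
  have key : ∀ n : ℕ, S n = c * n + d * (1 - (-p) ^ n) := by
    have step : ∀ n : ℕ, S n = c * n + d * (1 - (-p) ^ n) ∧
        S (n+1) = c * (n+1) + d * (1 - (-p) ^ (n+1)) := by
      intro n
      induction n with
      | zero =>
        constructor
        · simp [h0]
        · have hne : ((1:ℝ) + p) ^ 2 ≠ 0 := by positivity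
          rw [h1, hc, hd]; push_cast; field_simp; ring
      | succ k ih =>
        refine ⟨by exact_mod_cast ih.2, ?_⟩
        rw [hrec k, ih.1, ih.2, hc, hd]
        push_cast
        field_simp
        ring
    exact fun n => (step n).1
  have habs : ∀ n : ℕ, |(-p) ^ n| = p ^ n := by
    intro n
    rw [abs_pow, abs_neg, abs_of_nonneg hp0]
  refine ⟨?_, ?_, ?_⟩
  · intro n hn
    rw [key n, hn.neg_pow]
    have : p ^ n ≤ 1 := pow_le_one₀ hp0 hp1
    nlinarith
  · intro n
    rw [key n]
    have h2 : -(p ^ n) ≤ (-p) ^ n := by rw [← habs n]; exact neg_abs_le _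
    have h4 : 0 ≤ d * (2 + p ^ n - (-p) ^ n) :=
      mul_nonneg hd0 (by
        have h5 : (-p) ^ n ≤ p ^ n := by rw [← habs n]; exact le_abs_self _
        nlinarith [pow_nonneg hp0 n])
    linarith
  · intro n
    rw [key n]
    have : c * n + d * (1 - (-p) ^ n) - c * n - d = -(d * (-p) ^ n) := by ring
    rw [this, abs_neg, abs_mul, abs_of_nonneg hd0, habs n]
end

section
/- For any p ∈ [0,1), the sequence S_n - (p/(1+p))n converges to p²/(1+p)² as n → ∞, with geometric rate p. -/
/-!
The homogeneous part of the recurrence has characteristic polynomial `(x - 1)(x + p)`; the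
constant term `p` resonates with the root `1` and produces the linear growth, so
`S n = (p/(1+p)) n + (p²/(1+p)²)(1 - (-p)^n)`. Hence the deviation from the limit is exactly
`-(p²/(1+p)²)(-p)^n`, which tends to `0` at rate `p` since `|-p| < 1`.
-/

theorem eq_closedForm_of_rec {K : Type*} [Field K] (p : K) (hp : 1 + p ≠ 0) (S : ℕ → K)
    (h0 : S 0 = 0) (h1 : S 1 = p)
    (hrec : ∀ n : ℕ, S (n + 2) = p * (1 + S n) + (1 - p) * S (n + 1)) (n : ℕ) :
    S n = p / (1 + p) * n + p ^ 2 / (1 + p) ^ 2 * (1 - (-p) ^ n) := by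
  induction n using Nat.twoStepInduction with
  | zero => simp [h0]
  | one => rw [h1]; field_simp; ring
  | more n ih0 ih1 =>
    rw [hrec n, ih0, ih1]
    push_cast
    field_simp
    ring

theorem sub_limit_eq_of_rec {K : Type*} [Field K] (p : K) (hp : 1 + p ≠ 0) (S : ℕ → K)
    (h0 : S 0 = 0) (h1 : S 1 = p)
    (hrec : ∀ n : ℕ, S (n + 2) = p * (1 + S n) + (1 - p) * S (n + 1)) (n : ℕ) :
    S n - p / (1 + p) * n - p ^ 2 / (1 + p) ^ 2 = -(p ^ 2 / (1 + p) ^ 2) * (-p) ^ n := by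
  rw [eq_closedForm_of_rec p hp S h0 h1 hrec n]
  ring

/-- For `p ∈ [0,1)`, the sequence `S n - (p/(1+p))n` converges to `p²/(1+p)²`
as `n → ∞`, with geometric rate `p`. -/
theorem stmt_18 (p : ℝ) (hp0 : 0 ≤ p) (hp1 : p < 1) (S : ℕ → ℝ)
    (h0 : S 0 = 0) (h1 : S 1 = p)
    (hrec : ∀ n : ℕ, S (n + 2) = p * (1 + S n) + (1 - p) * S (n + 1)) :
    Filter.Tendsto (fun n : ℕ => S n - (p / (1 + p)) * n)
      Filter.atTop (nhds (p ^ 2 / (1 + p) ^ 2)) ∧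
      ∀ n : ℕ, |S n - (p / (1 + p)) * n - p ^ 2 / (1 + p) ^ 2|
        ≤ (p ^ 2 / (1 + p) ^ 2) * p ^ n := by
  set c := p ^ 2 / (1 + p) ^ 2
  have hdev := sub_limit_eq_of_rec p (by linarith) S h0 h1 hrec
  refine ⟨?_, fun n => ?_⟩
  · have hgeom : Filter.Tendsto (fun n : ℕ => (-p) ^ n) Filter.atTop (nhds 0) :=
      tendsto_pow_atTop_nhds_zero_of_abs_lt_one (by rwa [abs_neg, abs_of_nonneg hp0])
    rw [← tendsto_sub_nhds_zero_iff, funext hdev]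
    simpa using hgeom.const_mul (-c)
  · rw [hdev, abs_mul, abs_neg, abs_pow, abs_neg, abs_of_nonneg hp0,
      abs_of_nonneg (by positivity : 0 ≤ c)]
end
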